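/- arXiv:1806.04825 — 6 statements merged into one kernel-verified Lean document; each statement's English description precedes it below -/
import Mathlib

section
/- Let W be the signed permutation group of rank n, viewed as the Weyl group of type C_n with simple roots α_i = e_i − e_{i+1} (1 ≤ i ≤ n−1) and α_n = 2e_n. Define a graph on involutions W[2]: there is an edge w →^α w' for a simple root α whenever w' = s_α w s_α and wα ≠ ±α. For w = τc ∈ W[2] define c₍₎(w) = {i : i < τ(i)}. If there is a path w ↷^σ w' in this graph (σ the product of the corresponding simple reflections), then σ c₍₎(w) σ⁻¹ = c₍₎(w') as subsets of {1,…,n} (products taken in W). -/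
open SemidirectProduct

/-- `Ξ_n`, the group of subsets of `{1,…,n}` under symmetric difference, realized as
`(ℤ/2ℤ)^n` written multiplicatively (a subset is identified with its indicator). -/
abbrev Xi (n : ℕ) := Fin n → Multiplicative (ZMod 2)

/-- The action of `S_n` on `Ξ_n` given by `τ·c = τ(c)`. -/
def permAct {n : ℕ} (τ : Equiv.Perm (Fin n)) : MulAut (Xi n) where
  toFun c := c ∘ τ.symm
  invFun c := c ∘ τ
  left_inv c := by funext i; simp
  right_inv c := by funext i; simp
  map_mul' c d := rfl

/-- The homomorphism `S_n →* Aut(Ξ_n)` defining the semidirect product. -/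
def phi (n : ℕ) : Equiv.Perm (Fin n) →* MulAut (Xi n) where
  toFun := permAct
  map_one' := by ext c i; rfl
  map_mul' σ τ := by ext c i; rfl

/-- The signed permutation group `W = S_n ⋉ Ξ_n`; the element written `τc` in the paper
is `inr τ * inl c`. -/
abbrev SW (n : ℕ) := Xi n ⋊[phi n] Equiv.Perm (Fin n)

/-- The action of the signed permutation group on `ℝ^n`:
`τ(e_i) = e_{τ(i)}` and `c(e_i) = -e_i` for `i ∈ c`, `e_i` otherwise. -/
def act (n : ℕ) (w : SW n) (v : Fin n → ℝ) : Fin n → ℝ := fun j =>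
  if w.left j = 1 then v (w.right⁻¹ j) else - v (w.right⁻¹ j)

/-- The simple roots of type `C_n`: `α_i = e_i − e_{i+1}` for `i + 1 < n`, and `α_n = 2eₙ`. -/
def sroot (n : ℕ) (i : Fin n) : Fin n → ℝ := fun j =>
  if (i : ℕ) + 1 < n then
    (if j = i then 1 else 0) + (if (j : ℕ) = (i : ℕ) + 1 then -1 else 0)
  else if j = i then 2 else 0

/-- The simple reflection `s_{α_i} ∈ W`. -/
def srefl (n : ℕ) (i : Fin n) : SW n :=
  if h : (i : ℕ) + 1 < n then inr (Equiv.swap i ⟨(i : ℕ) + 1, h⟩)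
  else inl (fun j => if j = i then Multiplicative.ofAdd 1 else 1)

/-- A path `w ↷^σ w'` in the graph on involutions: each edge conjugates by a simple
reflection `s_α` with `wα ≠ ±α`, and `σ` is the product of the reflections used. -/
inductive PathC (n : ℕ) : SW n → SW n → SW n → Prop where
  | refl (w : SW n) : PathC n w w 1
  | step {w w' σ : SW n} (i : Fin n) (h : PathC n w w' σ)
      (h1 : act n w' (sroot n i) ≠ sroot n i)
      (h2 : act n w' (sroot n i) ≠ - sroot n i) :
      PathC n w (srefl n i * w' * (srefl n i)⁻¹) (srefl n i * σ)

/-- `c₍₎(w) = {i : i < τ(i)}` for `w = τc`, as an element of `Ξ_n`. -/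
def clt (n : ℕ) (w : SW n) : Xi n :=
  fun i => if (i : ℕ) < (w.right i : ℕ) then Multiplicative.ofAdd 1 else 1

/-! Along an edge `w → s w s` with `s = s_{α_i}`, there are two cases. If `α_i = 2eₙ`, then `s` is a
sign change: it commutes with `Ξ_n` and leaves the permutation part `τ` of `w` unchanged, so both
sides are `c₍₎(w)`. If `s` is the transposition `(i i+1)`, the permutation part of `s w s` is `τ`
relabelled by that transposition, and the relabelling preserves the order of every pair except
`{i, i+1}`; hence `c₍₎(s w s) = s c₍₎(w) s` unless `τ` exchanges `i` and `i + 1`. But then, `w`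
being an involution, `w α_i = ±α_i`, which the edge condition excludes. Since `w' = σ w σ⁻¹`, every
vertex of the path is an involution, and the claim follows edge by edge. -/

section

variable {N : Type*} [Group N]

lemma SemidirectProduct.right_inv_eq_of_mul_self {G : Type*} [Group G] {φ : G →* MulAut N}
    {w : N ⋊[φ] G} (hw : w * w = 1) : w.right⁻¹ = w.right :=
  inv_eq_of_mul_eq_one_right (congrArg SemidirectProduct.right hw)

lemma SemidirectProduct.right_apply_right_apply_of_mul_self {α : Type*}
    {φ : Equiv.Perm α →* MulAut N} {w : N ⋊[φ] Equiv.Perm α} (hw : w * w = 1) (j : α) :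
    w.right (w.right j) = j := by
  simpa using (congrArg (· (w.right j)) (right_inv_eq_of_mul_self hw)).symm

end

section

variable {n : ℕ}

lemma left_right_apply_of_mul_self {w : SW n} (hw : w * w = 1) (j : Fin n) :
    w.left (w.right j) = w.left j := by
  have h : w.left (w.right j) * w.left j = 1 := by
    simpa [mul_left, phi, permAct] using congrFun (congrArg SemidirectProduct.left hw) (w.right j)
  rw [eq_inv_of_mul_eq_one_left h]
  exact ZMod.neg_eq_self_mod_two (Multiplicative.toAdd (w.left j))

lemma sroot_apply_of_lt {i : Fin n} (h : (i : ℕ) + 1 < n) (j : Fin n) :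
    sroot n i j = (if j = i then 1 else 0) - (if j = ⟨i + 1, h⟩ then 1 else 0) := by
  simp only [sroot, if_pos h, Fin.ext_iff]
  split_ifs <;> norm_num

lemma sroot_apply_eq_neg_of_swaps {i : Fin n} (h : (i : ℕ) + 1 < n) {τ : Equiv.Perm (Fin n)}
    (hτ : τ i = ⟨i + 1, h⟩) (hτ' : τ ⟨i + 1, h⟩ = i) (j : Fin n) :
    sroot n i (τ j) = - sroot n i j := by
  have hi : τ j = i ↔ j = ⟨i + 1, h⟩ :=
    ⟨fun e => τ.injective (e.trans hτ'.symm), fun e => e ▸ hτ'⟩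
  have hi' : τ j = ⟨i + 1, h⟩ ↔ j = i :=
    ⟨fun e => τ.injective (e.trans hτ.symm), fun e => e ▸ hτ⟩
  have hne : (⟨i + 1, h⟩ : Fin n) ≠ i := fun he => by simpa using congrArg Fin.val he
  simp only [sroot_apply_of_lt h, hi, hi']
  split_ifs <;> simp_all

lemma act_sroot_eq_or_eq_neg {w : SW n} (hw : w * w = 1) {i : Fin n} (h : (i : ℕ) + 1 < n)
    (hτ : w.right i = ⟨i + 1, h⟩) :
    act n w (sroot n i) = sroot n i ∨ act n w (sroot n i) = - sroot n i := by
  have hτ' : w.right ⟨i + 1, h⟩ = i := by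
    rw [← hτ, right_apply_right_apply_of_mul_self hw]
  have hsign : ∀ j, sroot n i j ≠ 0 → w.left j = w.left i := by
    intro j hj
    by_cases hji : j = i
    · rw [hji]
    have hji' : j = ⟨i + 1, h⟩ := by
      by_contra hji'
      simp [sroot_apply_of_lt h, hji, hji'] at hj
    rw [hji', ← hτ, left_right_apply_of_mul_self hw]
  have hact : ∀ j, act n w (sroot n i) j =
      if w.left j = 1 then - sroot n i j else sroot n i j := by
    intro j
    simp only [act, right_inv_eq_of_mul_self hw, sroot_apply_eq_neg_of_swaps h hτ hτ', neg_neg]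
  by_cases hc : w.left i = 1 <;> [right; left] <;> funext j <;>
    by_cases hj : sroot n i j = 0 <;> simp [hact, hj, hsign j, hc]

lemma swap_succ_apply_lt_swap_succ_apply_iff {i : Fin n} (h : (i : ℕ) + 1 < n) {a b : Fin n}
    (hab : ¬(a = i ∧ b = ⟨i + 1, h⟩)) (hba : ¬(a = ⟨i + 1, h⟩ ∧ b = i)) :
    (Equiv.swap i ⟨i + 1, h⟩ a : ℕ) < Equiv.swap i ⟨i + 1, h⟩ b ↔ (a : ℕ) < b := by
  rw [Equiv.swap_apply_def, Equiv.swap_apply_def]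
  split_ifs <;> simp only [Fin.ext_iff, not_and] at * <;> omega

lemma clt_conj_inl (c : Xi n) (w : SW n) : clt n (inl c * w * (inl c)⁻¹) = clt n w := rfl

lemma clt_conj_inr_swap_succ {i : Fin n} (h : (i : ℕ) + 1 < n) (w : SW n)
    (hi : w.right i ≠ ⟨i + 1, h⟩) (hi' : w.right ⟨i + 1, h⟩ ≠ i) :
    clt n (inr (Equiv.swap i ⟨i + 1, h⟩) * w * (inr (Equiv.swap i ⟨i + 1, h⟩))⁻¹) =
      phi n (Equiv.swap i ⟨i + 1, h⟩) (clt n w) := by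
  funext j
  have hlt := swap_succ_apply_lt_swap_succ_apply_iff h
    (a := Equiv.swap i ⟨i + 1, h⟩ j) (b := w.right (Equiv.swap i ⟨i + 1, h⟩ j))
    (fun ⟨ha, hb⟩ => hi (by rwa [ha] at hb)) (fun ⟨ha, hb⟩ => hi' (by rwa [ha] at hb))
  rw [Equiv.swap_apply_self] at hlt
  change (if (j : ℕ) < ((Equiv.swap i ⟨i + 1, h⟩ * w.right * (Equiv.swap i ⟨i + 1, h⟩)⁻¹) j : ℕ)
      then _ else _) = clt n w ((Equiv.swap i ⟨i + 1, h⟩).symm j)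
  rw [Equiv.swap_inv, Equiv.symm_swap, Equiv.Perm.mul_apply, Equiv.Perm.mul_apply]
  exact if_congr hlt rfl rfl

lemma srefl_conj_inl_clt {w : SW n} (hw : w * w = 1) {i : Fin n}
    (h1 : act n w (sroot n i) ≠ sroot n i) (h2 : act n w (sroot n i) ≠ - sroot n i) :
    srefl n i * inl (clt n w) * (srefl n i)⁻¹ =
      inl (clt n (srefl n i * w * (srefl n i)⁻¹)) := by
  by_cases h : (i : ℕ) + 1 < n
  · have hi : w.right i ≠ ⟨i + 1, h⟩ := fun hτ => (act_sroot_eq_or_eq_neg hw h hτ).elim h1 h2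
    have hi' : w.right ⟨i + 1, h⟩ ≠ i := fun hτ' =>
      hi (by simpa [hτ'] using right_apply_right_apply_of_mul_self hw ⟨i + 1, h⟩)
    rw [srefl, dif_pos h, clt_conj_inr_swap_succ h w hi hi', inl_aut, map_inv]
  · rw [srefl, dif_neg h, clt_conj_inl, ← map_inv, ← map_mul, ← map_mul, mul_inv_cancel_comm]

lemma PathC.eq_conj {w w' σ : SW n} (hp : PathC n w w' σ) : w' = σ * w * σ⁻¹ := by
  induction hp with
  | refl => simp
  | step i _ _ _ ih => rw [ih]; group

lemma PathC.mul_self_eq_one {w w' σ : SW n} (hp : PathC n w w' σ) (hw : w * w = 1) :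
    w' * w' = 1 := by
  calc w' * w' = σ * (w * w) * σ⁻¹ := by rw [hp.eq_conj]; group
    _ = 1 := by rw [hw, mul_one, mul_inv_cancel]

end

/-- if `w` is an involution and `w ↷^σ w'` is a path in the involution
graph of the type-`C_n` Weyl group, then `σ c₍₎(w) σ⁻¹ = c₍₎(w')` in `W`. -/
theorem stmt_3 (n : ℕ) (w w' σ : SW n) (hw : w * w = 1) (hp : PathC n w w' σ) :
    σ * inl (clt n w) * σ⁻¹ = (inl (clt n w') : SW n) := by
  induction hp with
  | refl => simp
  | @step v ρ i hpath h1 h2 ih =>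
    calc srefl n i * ρ * inl (clt n w) * (srefl n i * ρ)⁻¹
        = srefl n i * (ρ * inl (clt n w) * ρ⁻¹) * (srefl n i)⁻¹ := by group
      _ = inl (clt n (srefl n i * v * (srefl n i)⁻¹)) := by
        rw [ih, srefl_conj_inl_clt (hpath.mul_self_eq_one hw) h1 h2]
end

section
/- Let W be a finite Weyl group with simple system Δ. Call an involution w ∈ W minimal if w is the longest element of the parabolic subgroup generated by {s_α : α ∈ Π} for some subset Π ⊆ Δ and wα = −α for all α ∈ Π. Consider the graph on involutions of W with an edge w → w' whenever w' = s_α w s_α for some α ∈ Δ with wα ≠ ±α. Then every involution of W is connected by a path in this graph to some minimal involution. -/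
/-!
Springer's descent. If an involution `w` has a right descent `s` with `w s w⁻¹ ≠ s`, then
`s w s` is a strictly shorter involution one edge away, so induct on length. Otherwise `w`
centralizes every simple reflection in its right descent set `S`, hence centralizes `W_S`. Let `v`
be the longest element of `W_S`. Every inversion of `v` is a `W_S`-conjugate of some `s_j`,
`j ∈ S`, and is therefore also an inversion of `w`. From this one checks that `v w` has no right
descent, so `w = v⁻¹ = v`.

Inversions are counted by the parity cocycle `η(w, t) ∈ ZMod 2` (Björner–Brenti, §1.3): `W` acts
on `W × ZMod 2` by `s_i • (t, ε) = (s_i t s_i, ε + [t = s_i])`, and `η(w, t)` is the second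
coordinate of `w • (t, 0)`. Then `η(ab, t) = η(b, t) + η(a, b t b⁻¹)`, `η(w, t)` is the parity
of the number of occurrences of `t` in the right inversion sequence of any word for `w`, and for
a reflection `t`, `η(w, t) = 1` exactly when `ℓ(w t) < ℓ(w)`.
-/

namespace CoxeterSystem

variable {B W : Type*} [Group W] {M : CoxeterMatrix B} (cs : CoxeterSystem M W)

local prefix:100 "s" => cs.simple
local prefix:100 "π" => cs.wordProd
local prefix:100 "ℓ" => cs.length
local prefix:100 "ris " => cs.rightInvSeq

theorem simple_mul_simple_conj_eq_iff (i j : B) (c : ℕ) (t : W) :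
    s i * (s j * t * s j) * s i = (s j * s i) ^ c * s j ↔
      t = (s j * s i) ^ (2 + c) * s j := by
  set r := s j * s i
  have hconj : s i * (s j * t * s j) * s i = r⁻¹ * t * r := by simp [r, mul_assoc]
  have hflip : r * s j = s j * r⁻¹ := by simp [r, mul_assoc]
  have hpow : r ^ (2 + c) * s j = r * (r ^ c * s j) * r⁻¹ :=
    calc r ^ (2 + c) * s j = r * r ^ c * (r * s j) := by group
      _ = r * (r ^ c * s j) * r⁻¹ := by rw [hflip]; group
  rw [hconj, hpow]
  constructor <;> intro h
  · rw [← h]; group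
  · rw [h]; group

section ParityRep

variable [DecidableEq W]

def parityPerm (i : B) : Equiv.Perm (W × ZMod 2) :=
  Function.Involutive.toPerm (fun x ↦ (s i * x.1 * s i, x.2 + if x.1 = s i then 1 else 0)) <| by
    rintro ⟨t, ε⟩
    have hfix : t * s i = 1 ↔ t = s i := by rw [mul_eq_one_iff_eq_inv, inv_simple]
    simp [mul_assoc, hfix, add_assoc, CharTwo.add_self_eq_zero]

theorem parityPerm_apply (i : B) (t : W) (ε : ZMod 2) :
    cs.parityPerm i (t, ε) = (s i * t * s i, ε + if t = s i then 1 else 0) :=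
  rfl

theorem parityPerm_mul_parityPerm_apply (i j : B) (t : W) (ε : ZMod 2) :
    (cs.parityPerm i * cs.parityPerm j) (t, ε) =
      (s i * (s j * t * s j) * s i,
        ε + ∑ c ∈ Finset.range 2, if t = (s j * s i) ^ c * s j then 1 else 0) := by
  have hconj : s j * t * s j = s i ↔ t = s j * s i * s j := by
    constructor
    · intro h; rw [← h]; simp [mul_assoc]
    · rintro rfl; simp [mul_assoc]
  rw [Equiv.Perm.mul_apply, parityPerm_apply, parityPerm_apply]
  simp only [hconj, Finset.sum_range_succ, Finset.sum_range_zero, pow_zero, pow_one, one_mul,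
    zero_add, add_assoc]

theorem parityPerm_mul_parityPerm_pow_apply (i j : B) (m : ℕ) (t : W) (ε : ZMod 2) :
    ((cs.parityPerm i * cs.parityPerm j) ^ m) (t, ε) =
      ((s i * s j) ^ m * t * (s j * s i) ^ m,
        ε + ∑ c ∈ Finset.range (2 * m), if t = (s j * s i) ^ c * s j then 1 else 0) := by
  induction m generalizing t ε with
  | zero => simp
  | succ m ih =>
    rw [pow_succ, Equiv.Perm.mul_apply, parityPerm_mul_parityPerm_apply, ih]
    refine Prod.ext ?_ ?_
    · simp only [pow_succ (s i * s j), pow_succ' (s j * s i), mul_assoc]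
    · simp only [simple_mul_simple_conj_eq_iff, mul_add_one, add_comm (2 * m),
        Finset.sum_range_add, add_assoc]

theorem isLiftable_parityPerm : M.IsLiftable cs.parityPerm := fun i j ↦ by
  ext ⟨t, ε⟩ : 1
  -- `(s j * s i) ^ c * s j` has period `M i j` in `c`, so the sum counts each term twice.
  rw [parityPerm_mul_parityPerm_pow_apply, Equiv.Perm.one_apply, two_mul, Finset.sum_range_add]
  simp only [pow_add, simple_mul_simple_pow, simple_mul_simple_pow', one_mul, mul_one,
    CharTwo.add_self_eq_zero, add_zero]

def parityRep : W →* Equiv.Perm (W × ZMod 2) :=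
  cs.lift ⟨cs.parityPerm, cs.isLiftable_parityPerm⟩

def inversionParity (w t : W) : ZMod 2 :=
  (cs.parityRep w (t, 0)).2

theorem parityRep_wordProd_apply (ω : List B) (t : W) (ε : ZMod 2) :
    cs.parityRep (π ω) (t, ε) = (π ω * t * (π ω)⁻¹, ε + (ris ω).count t) := by
  induction ω generalizing t ε with
  | nil => simp
  | cons i ω ih =>
    have hconj : π ω * t * (π ω)⁻¹ = s i ↔ (π ω)⁻¹ * s i * π ω = t := by
      constructor <;> intro h <;> rw [← h] <;> group
    rw [wordProd_cons, map_mul, Equiv.Perm.mul_apply, ih, parityRep, lift_apply_simple,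
      parityPerm_apply]
    refine Prod.ext (by simp [mul_assoc]) ?_
    simp only [rightInvSeq, List.count_cons, beq_iff_eq, hconj]
    push_cast
    ring

theorem parityRep_apply (w t : W) (ε : ZMod 2) :
    cs.parityRep w (t, ε) = (w * t * w⁻¹, ε + cs.inversionParity w t) := by
  obtain ⟨ω, rfl⟩ := cs.wordProd_surjective w
  simp [inversionParity, parityRep_wordProd_apply]

theorem inversionParity_wordProd (ω : List B) (t : W) :
    cs.inversionParity (π ω) t = (ris ω).count t := by
  simp [inversionParity, parityRep_wordProd_apply]

theorem inversionParity_simple (i : B) (t : W) :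
    cs.inversionParity (s i) t = if t = s i then 1 else 0 := by
  rw [← wordProd_singleton, inversionParity_wordProd, rightInvSeq_singleton, List.count_singleton]
  by_cases h : t = s i <;> simp [h, Ne.symm]

theorem inversionParity_one (t : W) : cs.inversionParity 1 t = 0 := by
  simp only [inversionParity, map_one, Equiv.Perm.one_apply]

theorem inversionParity_mul (a b t : W) :
    cs.inversionParity (a * b) t =
      cs.inversionParity b t + cs.inversionParity a (b * t * b⁻¹) := by
  rw [inversionParity, map_mul, Equiv.Perm.mul_apply, cs.parityRep_apply b t 0, zero_add,
    parityRep_apply]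

theorem inversionParity_inv_conj (x t : W) :
    cs.inversionParity x⁻¹ (x * t * x⁻¹) = cs.inversionParity x t := by
  have h := cs.inversionParity_mul x⁻¹ x t
  rwa [inv_mul_cancel, inversionParity_one, eq_comm, CharTwo.add_eq_zero, eq_comm] at h

theorem IsReflection.inversionParity_self {t : W} (ht : cs.IsReflection t) :
    cs.inversionParity t t = 1 := by
  obtain ⟨x, i, rfl⟩ := ht
  have hx : x⁻¹ * (x * s i * x⁻¹) * x⁻¹⁻¹ = s i := by group
  rw [inversionParity_mul, hx, inversionParity_inv_conj, inversionParity_mul,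
    inversionParity_simple, if_pos rfl, simple_mul_simple_self, one_mul, inv_simple,
    add_left_comm, CharTwo.add_self_eq_zero, add_zero]

theorem length_mul_lt_of_inversionParity_eq_one {w t : W} (h : cs.inversionParity w t = 1) :
    ℓ (w * t) < ℓ w := by
  obtain ⟨ω, hω, rfl⟩ := cs.exists_isReduced w
  rw [inversionParity_wordProd] at h
  have hcount : (ris ω).count t ≠ 0 := by
    intro h0
    rw [h0, Nat.cast_zero] at h
    exact zero_ne_one h
  exact (cs.isRightInversion_of_mem_rightInvSeq hω
    (List.count_pos_iff.mp (Nat.pos_of_ne_zero hcount))).2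

theorem inversionParity_eq_one_iff {w t : W} (ht : cs.IsReflection t) :
    cs.inversionParity w t = 1 ↔ ℓ (w * t) < ℓ w := by
  refine ⟨cs.length_mul_lt_of_inversionParity_eq_one, fun hlt ↦ ?_⟩
  have hcocycle : cs.inversionParity w t = 1 + cs.inversionParity (w * t) t := by
    have h := cs.inversionParity_mul (w * t) t t
    rwa [mul_inv_cancel_right, mul_assoc, ht.mul_self, mul_one, ht.inversionParity_self] at h
  obtain h | h := (by decide : ∀ a : ZMod 2, a = 0 ∨ a = 1) (cs.inversionParity (w * t) t)
  · rw [hcocycle, h, add_zero]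
  · have hgt := cs.length_mul_lt_of_inversionParity_eq_one h
    rw [mul_assoc, ht.mul_self, mul_one] at hgt
    exact absurd hlt hgt.not_gt

theorem inversionParity_simple_eq_one_iff {w : W} {i : B} :
    cs.inversionParity w (s i) = 1 ↔ cs.IsRightDescent w i :=
  cs.inversionParity_eq_one_iff (cs.isReflection_simple i)

theorem inversionParity_conj_of_mul_self_eq_one {w : W} (hw : w * w = 1) (t : W) :
    cs.inversionParity w (w * t * w⁻¹) = cs.inversionParity w t := by
  simpa [inv_eq_of_mul_eq_one_right hw] using cs.inversionParity_inv_conj w t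

theorem exists_conj_simple_of_inversionParity_eq_one {S : Set B} {v t : W}
    (hv : v ∈ Subgroup.closure (cs.simple '' S)) (ht : cs.inversionParity v t = 1) :
    ∃ h ∈ Subgroup.closure (cs.simple '' S), ∃ j ∈ S, t = h * s j * h⁻¹ := by
  induction hv using Subgroup.closure_induction generalizing t with
  | mem x hx =>
    obtain ⟨j, hj, rfl⟩ := hx
    rw [inversionParity_simple] at ht
    split_ifs at ht with htj
    · exact ⟨1, one_mem _, j, hj, by simp [htj]⟩
    · exact absurd ht zero_ne_one
  | one => exact absurd ((inversionParity_one cs t).symm.trans ht) zero_ne_one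
  | mul a b ha hb iha ihb =>
    rw [inversionParity_mul] at ht
    obtain htb | htb := (by decide : ∀ a : ZMod 2, a = 0 ∨ a = 1) (cs.inversionParity b t)
    · rw [htb, zero_add] at ht
      obtain ⟨h, hh, j, hj, heq⟩ := iha ht
      refine ⟨b⁻¹ * h, mul_mem (inv_mem hb) hh, j, hj, ?_⟩
      calc t = b⁻¹ * (b * t * b⁻¹) * b := by group
        _ = b⁻¹ * h * s j * (b⁻¹ * h)⁻¹ := by rw [heq]; group
    · exact ihb htb
  | inv a ha iha =>
    have hta : cs.inversionParity a (a⁻¹ * t * a) = 1 := by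
      rw [← inversionParity_inv_conj]; simpa [mul_assoc] using ht
    obtain ⟨h, hh, j, hj, heq⟩ := iha hta
    refine ⟨a * h, mul_mem ha hh, j, hj, ?_⟩
    calc t = a * (a⁻¹ * t * a) * a⁻¹ := by group
      _ = a * h * s j * (a * h)⁻¹ := by rw [heq]; group

theorem inversionParity_eq_one_of_mem_closure {S : Set B} {w v t : W}
    (hw : w ∈ Subgroup.centralizer (cs.simple '' S)) (hS : ∀ j ∈ S, cs.inversionParity w (s j) = 1)
    (hv : v ∈ Subgroup.closure (cs.simple '' S)) (ht : cs.inversionParity v t = 1) :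
    cs.inversionParity w t = 1 := by
  obtain ⟨h, hh, j, hj, rfl⟩ := cs.exists_conj_simple_of_inversionParity_eq_one hv ht
  have hhw : h * w = w * h := by
    rw [← Subgroup.centralizer_closure] at hw
    exact Subgroup.mem_centralizer_iff.mp hw h hh
  have hjw : w * s j * w⁻¹ = s j := by
    rw [mul_inv_eq_iff_eq_mul, Subgroup.mem_centralizer_iff.mp hw _ ⟨j, hj, rfl⟩]
  have hparity_wh := cs.inversionParity_mul w h (s j)
  have hparity_hw := cs.inversionParity_mul h w (s j)
  rw [hhw, hjw, hS j hj] at hparity_hw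
  linear_combination hparity_wh.symm.trans hparity_hw

end ParityRep

theorem length_simple_mul_mul_simple_lt {w : W} (hw : w * w = 1) {j : B}
    (hj : cs.IsRightDescent w j) (hne : w * s j * w⁻¹ ≠ s j) : ℓ (s j * w * s j) < ℓ w := by
  classical
  have h : cs.inversionParity (s j * w) (s j) = 1 := by
    rw [inversionParity_mul, inversionParity_simple, if_neg hne, add_zero,
      cs.inversionParity_simple_eq_one_iff.mpr hj]
  calc ℓ (s j * w * s j) < ℓ (s j * w) := cs.length_mul_lt_of_inversionParity_eq_one h
    _ = ℓ (w * s j) := by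
      rw [← length_inv, mul_inv_rev, inv_simple, inv_eq_of_mul_eq_one_right hw]
    _ < ℓ w := hj

theorem mem_closure_rightDescents_and_length_le [Finite W] {w : W} (hw : w * w = 1)
    (hcomm : ∀ j, cs.IsRightDescent w j → w * s j * w⁻¹ = s j) :
    w ∈ Subgroup.closure (cs.simple '' {j | cs.IsRightDescent w j}) ∧
      ∀ u ∈ Subgroup.closure (cs.simple '' {j | cs.IsRightDescent w j}), ℓ u ≤ ℓ w := by
  classical
  set S := {j | cs.IsRightDescent w j}
  set H := Subgroup.closure (cs.simple '' S)
  have hwS : w ∈ Subgroup.centralizer (cs.simple '' S) := by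
    rintro _ ⟨j, hj, rfl⟩
    exact (mul_inv_eq_iff_eq_mul.mp (hcomm j hj)).symm
  have hdesc : ∀ j ∈ S, cs.inversionParity w (s j) = 1 :=
    fun j hj ↦ cs.inversionParity_simple_eq_one_iff.mpr hj
  obtain ⟨v, hvH, hvmax⟩ :=
    Set.exists_max_image (H : Set W) cs.length (Set.toFinite _) ⟨1, H.one_mem⟩
  have hvw : v * w = 1 := by
    by_contra hne
    obtain ⟨k, hk⟩ := cs.exists_rightDescent_of_ne_one hne
    rw [← inversionParity_simple_eq_one_iff, inversionParity_mul] at hk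
    obtain hwk | hwk := (by decide : ∀ a : ZMod 2, a = 0 ∨ a = 1) (cs.inversionParity w (s k))
    · rw [hwk, zero_add] at hk
      have h := cs.inversionParity_eq_one_of_mem_closure hwS hdesc hvH hk
      rw [inversionParity_conj_of_mul_self_eq_one cs hw, hwk] at h
      exact zero_ne_one h
    · have hkS : k ∈ S := cs.inversionParity_simple_eq_one_iff.mp hwk
      have hvk : cs.inversionParity v (s k) = 1 := cs.inversionParity_simple_eq_one_iff.mpr <|
        lt_of_le_of_ne (hvmax _ (mul_mem hvH (Subgroup.subset_closure ⟨k, hkS, rfl⟩)))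
          (cs.length_mul_simple_ne v k)
      rw [hwk, hcomm k hkS, hvk, CharTwo.add_self_eq_zero] at hk
      exact zero_ne_one hk
  rw [eq_inv_of_mul_eq_one_right hvw, length_inv]
  exact ⟨inv_mem hvH, hvmax⟩

end CoxeterSystem

theorem stmt_4_general {B W : Type*} [Group W] [Finite W] (M : CoxeterMatrix B)
    (cs : CoxeterSystem M W) (w : W) (hw : w * w = 1) :
    ∃ w' : W,
      Relation.ReflTransGen
        (fun u v => ∃ i : B, v = cs.simple i * u * cs.simple i ∧
          u * cs.simple i * u⁻¹ ≠ cs.simple i) w w' ∧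
      w' * w' = 1 ∧
      ∃ Pa : Set B,
        w' ∈ Subgroup.closure (cs.simple '' Pa) ∧
        (∀ u ∈ Subgroup.closure (cs.simple '' Pa), cs.length u ≤ cs.length w') ∧
        ∀ i ∈ Pa, w' * cs.simple i * w'⁻¹ = cs.simple i ∧
          cs.length (w' * cs.simple i) < cs.length w' := by
  induction hlen : cs.length w using Nat.strong_induction_on generalizing w with
  | _ n ih =>
    by_cases hcomm : ∀ j, cs.IsRightDescent w j → w * cs.simple j * w⁻¹ = cs.simple j
    · obtain ⟨hmem, hlongest⟩ := cs.mem_closure_rightDescents_and_length_le hw hcomm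
      exact ⟨w, .refl, hw, {j | cs.IsRightDescent w j}, hmem, hlongest,
        fun j hj ↦ ⟨hcomm j hj, hj⟩⟩
    · push Not at hcomm
      obtain ⟨j, hj, hne⟩ := hcomm
      have hconj : cs.simple j * w * cs.simple j * (cs.simple j * w * cs.simple j) = 1 := by
        simp only [mul_assoc, CoxeterSystem.simple_mul_simple_cancel_left]
        rw [← mul_assoc w, hw, one_mul, cs.simple_mul_simple_self]
      obtain ⟨w', hpath, hw'⟩ :=
        ih _ (hlen ▸ cs.length_simple_mul_mul_simple_lt hw hj hne) _ hconj rfl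
      exact ⟨w', .head ⟨j, rfl, hne⟩ hpath, hw'⟩

/-- Springer: in a finite Weyl group (a finite crystallographic Coxeter
group), every involution is connected, in the graph on involutions with edges
`w → s_α w s_α` whenever `wα ≠ ±α` (equivalently `w s_α w⁻¹ ≠ s_α`), to a minimal
involution, i.e. to the longest element `w'` of a standard parabolic subgroup generated
by `{s_α : α ∈ Pa}` satisfying `w'α = −α` for all `α ∈ Pa` (equivalently
`w' s_α w'⁻¹ = s_α` and `ℓ(w' s_α) < ℓ(w')`). -/
theorem stmt_4 {B W : Type*} [Group W] [Finite W] (M : CoxeterMatrix B)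
    (cs : CoxeterSystem M W) (hcrys : ∀ i j : B, M i j ∈ ({1, 2, 3, 4, 6} : Set ℕ))
    (w : W) (hw : w * w = 1) :
    ∃ w' : W,
      Relation.ReflTransGen
        (fun u v => ∃ i : B, v = cs.simple i * u * cs.simple i ∧
          u * cs.simple i * u⁻¹ ≠ cs.simple i) w w' ∧
      w' * w' = 1 ∧
      ∃ Pa : Set B,
        w' ∈ Subgroup.closure (cs.simple '' Pa) ∧
        (∀ u ∈ Subgroup.closure (cs.simple '' Pa), cs.length u ≤ cs.length w') ∧
        ∀ i ∈ Pa, w' * cs.simple i * w'⁻¹ = cs.simple i ∧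
          cs.length (w' * cs.simple i) < cs.length w' :=
  stmt_4_general M cs w hw
end

section
/- Consider the sign-deletion graph E on tuples of signs (edge e →^i e' deletes two adjacent equal entries at positions i, i+1). For a path starting at e ∈ {±1}^k with edge-label pattern (i₁,…,i_t), define its coordinate history ((x₁,y₁),…,(x_t,y_t)), where x_s < y_s are the coordinates of the original tuple e deleted at step s (defined recursively: (x₁,y₁)=(i₁,i₁+1), and at step s, if z₁<⋯<z_{k−2(s−1)} enumerate the surviving coordinates, then x_s = z_{i_s}, y_s = z_{i_s+1}). Then the history is non-crossing: there are no indices i, j with x_i < x_j < y_i < y_j. -/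
/-- The alternating sign tuple `f_t = (1, −1, 1, …, (−1)^{t−1})`, with `+1 = true`. -/
def falt (t : ℕ) : List Bool := (List.range t).map fun j => decide (j % 2 = 0)

/-- Negation of a sign tuple. -/
def negT (l : List Bool) : List Bool := l.map not

/-- `Edge l i l'`: the edge labeled `i` (1-indexed) of the sign-deletion graph; it requires
`1 ≤ i ≤ k−1`, `e_i = e_{i+1}`, and deletes the `i`-th and `(i+1)`-th entries of `l`. -/
def Edge (l : List Bool) (i : ℕ) (l' : List Bool) : Prop :=
  1 ≤ i ∧ i + 1 ≤ l.length ∧ l[i - 1]? = l[i]? ∧ l' = l.take (i - 1) ++ l.drop (i + 1)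

/-- `PathP l pat l'`: a path from `l` to `l'` in the sign-deletion graph whose sequence
of edge labels (its pattern) is `pat`. -/
inductive PathP : List Bool → List ℕ → List Bool → Prop where
  | nil (l : List Bool) : PathP l [] l
  | cons {l l' l'' : List Bool} {i : ℕ} {is : List ℕ} :
      Edge l i l' → PathP l' is l'' → PathP l (i :: is) l''

/-- Auxiliary for the coordinate history: `coords` is the increasing list of surviving
original (1-indexed) coordinates; at each step the pair at (1-indexed) positions
`i, i+1` of `coords` is recorded and removed. -/
def histAux : List ℕ → List ℕ → List (ℕ × ℕ)
  | _, [] => []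
  | coords, i :: is =>
      (coords.getD (i - 1) 0, coords.getD i 0) ::
        histAux (coords.take (i - 1) ++ coords.drop (i + 1)) is

/-- The coordinate history `((x₁,y₁),…,(x_t,y_t))` of a path with pattern `pat` starting
at a tuple of length `k` (coordinates are 1-indexed). -/
def hist (k : ℕ) (pat : List ℕ) : List (ℕ × ℕ) :=
  histAux ((List.range k).map (· + 1)) pat


/-!
At step `s` the deleted coordinates `x_s < y_s` are adjacent in the increasing list of
surviving coordinates, and every coordinate deleted later still survives at step `s`; so it
lies outside the closed interval `[x_s, y_s]`. Two crossing steps would put an endpoint of the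
later step strictly inside the interval of the earlier one.
-/

def ValidPattern : ℕ → List ℕ → Prop
  | _, [] => True
  | k, i :: is => 1 ≤ i ∧ i + 1 ≤ k ∧ ValidPattern (k - 2) is

def Avoids (p q : ℕ × ℕ) : Prop :=
  q.1 ∉ Set.Icc p.1 p.2 ∧ q.2 ∉ Set.Icc p.1 p.2

lemma Edge.length_eq {l l' : List Bool} {i : ℕ} (h : Edge l i l') :
    l'.length = l.length - 2 := by
  obtain ⟨h1, h2, -, rfl⟩ := h
  simp only [List.length_append, List.length_take, List.length_drop]
  omega

lemma PathP.validPattern {l l' : List Bool} {pat : List ℕ} (h : PathP l pat l') :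
    ValidPattern l.length pat := by
  induction h with
  | nil => trivial
  | cons he _ ih => exact ⟨he.1, he.2.1, he.length_eq ▸ ih⟩

lemma List.exists_eq_append_cons_cons {α : Type*} {l : List α} {j : ℕ}
    (h : j + 1 < l.length) : ∃ L x y R, l = L ++ x :: y :: R ∧ L.length = j := by
  refine ⟨l.take j, l[j], l[j + 1], l.drop (j + 2), ?_, List.length_take_of_le (by omega)⟩
  rw [List.getElem_cons_drop, List.getElem_cons_drop, List.take_append_drop]

lemma List.notMem_Icc_of_pairwise_append_cons_cons {L R : List ℕ} {x y z : ℕ}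
    (h : (L ++ x :: y :: R).Pairwise (· < ·)) (hz : z ∈ L ++ R) : z ∉ Set.Icc x y := by
  simp only [List.pairwise_append, List.pairwise_cons, List.mem_cons] at h
  obtain ⟨-, ⟨-, hyR, -⟩, hL⟩ := h
  rintro ⟨hxz, hzy⟩
  rcases List.mem_append.mp hz with hz | hz
  · exact (hL z hz x (Or.inl rfl)).not_ge hxz
  · exact (hyR z hz).not_ge hzy

lemma histAux_append_cons_cons (L R : List ℕ) (x y : ℕ) (is : List ℕ) :
    histAux (L ++ x :: y :: R) ((L.length + 1) :: is) = (x, y) :: histAux (L ++ R) is := by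
  rw [histAux, Nat.add_sub_cancel, List.take_left, List.getD_append_right _ _ _ _ le_rfl,
    List.getD_append_right _ _ _ _ (Nat.le_succ _), show L.length + 1 + 1 = L.length + 2 from rfl,
    List.drop_length_add_append]
  simp

lemma histAux_length (pat : List ℕ) : ∀ c, (histAux c pat).length = pat.length := by
  induction pat with
  | nil => intro c; rfl
  | cons i is ih => intro c; simp [histAux, ih]

lemma mem_of_mem_histAux {pat : List ℕ} :
    ∀ {c : List ℕ}, ValidPattern c.length pat →
      ∀ p ∈ histAux c pat, p.1 ∈ c ∧ p.2 ∈ c := by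
  induction pat with
  | nil => simp [histAux]
  | cons i is ih =>
    intro c ⟨h1, h2, hv⟩ p hp
    obtain ⟨L, x, y, R, rfl, hL⟩ :=
      List.exists_eq_append_cons_cons (l := c) (j := i - 1) (by omega)
    obtain rfl : i = L.length + 1 := by omega
    have hv' : ValidPattern (L ++ R).length is := by simpa [← add_assoc] using hv
    have hsub : (L ++ R).Sublist (L ++ x :: y :: R) := by simp
    rw [histAux_append_cons_cons, List.mem_cons] at hp
    rcases hp with rfl | hp
    · simp
    · exact (ih hv' p hp).imp (hsub.subset ·) (hsub.subset ·)

lemma pairwise_avoids_histAux {pat : List ℕ} :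
    ∀ {c : List ℕ}, c.Pairwise (· < ·) → ValidPattern c.length pat →
      (histAux c pat).Pairwise Avoids := by
  induction pat with
  | nil => simp [histAux]
  | cons i is ih =>
    intro c hc ⟨h1, h2, hv⟩
    obtain ⟨L, x, y, R, rfl, hL⟩ :=
      List.exists_eq_append_cons_cons (l := c) (j := i - 1) (by omega)
    obtain rfl : i = L.length + 1 := by omega
    have hv' : ValidPattern (L ++ R).length is := by simpa [← add_assoc] using hv
    have hsub : (L ++ R).Sublist (L ++ x :: y :: R) := by simp
    rw [histAux_append_cons_cons, List.pairwise_cons]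
    refine ⟨fun q hq => ?_, ih (hc.sublist hsub) hv'⟩
    obtain ⟨hq1, hq2⟩ := mem_of_mem_histAux hv' q hq
    exact ⟨List.notMem_Icc_of_pairwise_append_cons_cons hc hq1,
      List.notMem_Icc_of_pairwise_append_cons_cons hc hq2⟩

/-- the coordinate history of a path in the sign-deletion graph is
non-crossing: there are no steps `a`, `b` with `x_a < x_b < y_a < y_b`. -/
theorem stmt_8 (e e' : List Bool) (pat : List ℕ) (hp : PathP e pat e')
    (a b : ℕ) (ha : a < pat.length) (hb : b < pat.length) :
    ¬ (((hist e.length pat).getD a (0, 0)).1 < ((hist e.length pat).getD b (0, 0)).1 ∧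
       ((hist e.length pat).getD b (0, 0)).1 < ((hist e.length pat).getD a (0, 0)).2 ∧
       ((hist e.length pat).getD a (0, 0)).2 < ((hist e.length pat).getD b (0, 0)).2) := by
  rintro ⟨hxx, hxy, hyy⟩
  have hlen : (hist e.length pat).length = pat.length := histAux_length pat _
  rw [List.getD_eq_getElem _ _ (by rwa [hlen]), List.getD_eq_getElem _ _ (by rwa [hlen])]
    at hxx hxy hyy
  have havoids : (hist e.length pat).Pairwise Avoids :=
    pairwise_avoids_histAux (List.pairwise_map.2 (List.pairwise_lt_range.imp Nat.succ_lt_succ))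
      (by simpa using hp.validPattern)
  rcases lt_trichotomy a b with hab | rfl | hba
  · exact (List.pairwise_iff_getElem.mp havoids a b _ _ hab).1 ⟨hxx.le, hxy.le⟩
  · exact lt_irrefl _ hxx
  · exact (List.pairwise_iff_getElem.mp havoids b a _ _ hba).2 ⟨hxy.le, hyy.le⟩
end

section
/- With the same setup of the sign-deletion graph and the coordinate history ((x₁,y₁),…,(x_t,y_t)) of a path starting at e ∈ {±1}^k: for every i with 2 ≤ i ≤ t, the interval of integers [x_i + 1, y_i − 1] is contained in the set {x_j, y_j : 1 ≤ j ≤ i−1} of coordinates deleted at earlier steps. -/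
/-!
At every step the recorded pair `(x, y)` consists of two neighbours in the increasing list of
surviving coordinates, so a coordinate `m` with `x < m < y` no longer survives. Since the
surviving coordinates start as all of `1, …, k` and every coordinate that leaves the list is
recorded at the step where it leaves, `m` was recorded at an earlier step.
-/

namespace List

variable {α : Type*}

theorem getD_mem_of_ne_default {l : List α} {n : ℕ} {d : α} (h : l.getD n d ≠ d) :
    l.getD n d ∈ l := by
  by_cases hn : n < l.length
  · rw [getD_eq_getElem _ _ hn]
    exact getElem_mem hn
  · exact absurd (getD_eq_default _ _ (not_lt.mp hn)) h

theorem take_append_drop_sublist (l : List α) {n k : ℕ} (h : n ≤ k) :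
    (l.take n ++ l.drop k).Sublist l := by
  conv_rhs => rw [← take_append_drop n l]
  exact (drop_sublist_drop_left l h).append_left _

theorem mem_take_append_drop_or_eq_getD {l : List α} {x : α} (hx : x ∈ l) (i : ℕ) (d : α) :
    x ∈ l.take (i - 1) ++ l.drop (i + 1) ∨ x = l.getD (i - 1) d ∨ x = l.getD i d := by
  obtain ⟨p, hp, rfl⟩ := mem_iff_getElem.mp hx
  rw [mem_append]
  by_cases hlt : p < i - 1
  · exact .inl (.inl (mem_iff_getElem.mpr ⟨p, by simp [hp, hlt], getElem_take⟩))
  by_cases hgt : i + 1 ≤ p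
  · refine .inl (.inr (mem_iff_getElem.mpr ⟨p - (i + 1), by simp; omega, ?_⟩))
    simp only [getElem_drop, Nat.add_sub_cancel' hgt]
  obtain rfl | rfl : p = i - 1 ∨ p = i := by omega
  · exact .inr (.inl (getD_eq_getElem _ _ hp).symm)
  · exact .inr (.inr (getD_eq_getElem _ _ hp).symm)

theorem notMem_of_getD_pred_lt_of_lt_getD {l : List ℕ} (hl : l.Pairwise (· < ·)) {i m : ℕ}
    (h₁ : l.getD (i - 1) 0 < m) (h₂ : m < l.getD i 0) : m ∉ l := by
  have hi : i < l.length := by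
    by_contra! hi
    rw [getD_eq_default _ _ hi] at h₂
    omega
  have hi₀ : i ≠ 0 := by
    rintro rfl
    exact lt_asymm h₁ h₂
  rw [getD_eq_getElem _ _ (by omega)] at h₁
  rw [getD_eq_getElem _ _ hi] at h₂
  rintro hm
  obtain ⟨p, hp, rfl⟩ := mem_iff_getElem.mp hm
  have hp₁ : i - 1 < p := hl.sortedLT.getElem_lt_getElem_iff.mp h₁
  have hp₂ : p < i := hl.sortedLT.getElem_lt_getElem_iff.mp h₂
  omega

end List

theorem histAux_mem_earlier_or_gap {coords pat : List ℕ} (hsort : coords.Pairwise (· < ·))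
    {s m : ℕ} (hm₁ : ((histAux coords pat).getD s (0, 0)).1 < m)
    (hm₂ : m < ((histAux coords pat).getD s (0, 0)).2) :
    (∃ j < s, m = ((histAux coords pat).getD j (0, 0)).1 ∨
      m = ((histAux coords pat).getD j (0, 0)).2) ∨
    (m ∉ coords ∧ ∃ b ∈ coords, m < b) := by
  induction pat generalizing coords s with
  | nil => simp [histAux] at hm₂
  | cons i is ih =>
    simp only [histAux] at hm₁ hm₂ ⊢
    cases s with
    | zero =>
      simp only [List.getD_cons_zero] at hm₁ hm₂
      exact .inr ⟨List.notMem_of_getD_pred_lt_of_lt_getD hsort hm₁ hm₂, _,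
        List.getD_mem_of_ne_default (by omega), hm₂⟩
    | succ s =>
      simp only [List.getD_cons_succ] at hm₁ hm₂
      have hsub := coords.take_append_drop_sublist (n := i - 1) (k := i + 1) (by omega)
      rcases ih (hsort.sublist hsub) hm₁ hm₂ with ⟨j, hj, hmj⟩ | ⟨hm, b, hb, hmb⟩
      · exact .inl ⟨j + 1, by omega, by simpa only [List.getD_cons_succ] using hmj⟩
      by_cases hmc : m ∈ coords
      · refine .inl ⟨0, by omega, ?_⟩
        simpa [hm] using List.mem_take_append_drop_or_eq_getD hmc i 0
      · exact .inr ⟨hmc, b, hsub.subset hb, hmb⟩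

theorem stmt_9_general (e : List Bool) (pat : List ℕ)
    (s : ℕ) (m : ℕ)
    (hm1 : ((hist e.length pat).getD s (0, 0)).1 < m)
    (hm2 : m < ((hist e.length pat).getD s (0, 0)).2) :
    ∃ j < s, m = ((hist e.length pat).getD j (0, 0)).1 ∨
      m = ((hist e.length pat).getD j (0, 0)).2 := by
  have hsort : ((List.range e.length).map (· + 1)).Pairwise (· < ·) :=
    List.pairwise_map.mpr (List.pairwise_lt_range.imp fun h => by omega)
  obtain h | ⟨hm, b, hb, hmb⟩ := histAux_mem_earlier_or_gap hsort hm1 hm2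
  · exact h
  · simp only [List.mem_map, List.mem_range] at hm hb
    obtain ⟨b, hb, rfl⟩ := hb
    exact absurd ⟨m - 1, by omega, by omega⟩ hm

/-- in the coordinate history of a path, every coordinate strictly between
`x_s` and `y_s` was deleted at an earlier step (here steps are 0-indexed, so the paper's
`2 ≤ i ≤ t` becomes `1 ≤ s < t`). -/
theorem stmt_9 (e e' : List Bool) (pat : List ℕ) (hp : PathP e pat e')
    (s : ℕ) (hs1 : 1 ≤ s) (hs2 : s < pat.length) (m : ℕ)
    (hm1 : ((hist e.length pat).getD s (0, 0)).1 < m)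
    (hm2 : m < ((hist e.length pat).getD s (0, 0)).2) :
    ∃ j < s, m = ((hist e.length pat).getD j (0, 0)).1 ∨
      m = ((hist e.length pat).getD j (0, 0)).2 :=
  stmt_9_general e pat s m hm1 hm2
end

section
/- In the sign-deletion graph E on the set V of all finite tuples of signs, the sets V_t (t ∈ ℤ), where V_t consists of the tuples admitting a path to the alternating tuple sign(t)·f_{|t|}, are pairwise disjoint and their union is all of V. Consequently, for each e ∈ V there is exactly one t ∈ ℤ with e ∈ V_t, and the full subgraphs on the V_t are the connected components of the underlying undirected reachability structure. -/
/-- The terminal vertex `sign(t)·f_{|t|}` attached to `t ∈ ℤ`. -/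
def target (t : ℤ) : List Bool := if 0 ≤ t then falt t.toNat else negT (falt (-t).toNat)

/-- `V_t`: the set of sign tuples admitting a path to `sign(t)·f_{|t|}`. -/
def Vmem (t : ℤ) (l : List Bool) : Prop := ∃ pat : List ℕ, PathP l pat (target t)

/-!
Deleting two adjacent equal signs is the rewriting system of the infinite dihedral group
`⟨x, y | x² = y² = 1⟩`, so every tuple has a normal form `reduce e`, obtained by cancelling
from the right. It is invariant under edges and reachable from `e` by a path, hence `e` and `e'`
are connected iff `reduce e = reduce e'`. The normal forms are exactly the alternating tuples,
i.e. the `target t`, and `t` is read off as the length signed by the first entry; thus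
`V_t = {e | reduce e = target t}`.
-/

open Relation

def cancelCons (a : Bool) : List Bool → List Bool
  | [] => [a]
  | b :: r => if a = b then r else a :: b :: r

def reduce : List Bool → List Bool
  | [] => []
  | a :: l => cancelCons a (reduce l)

lemma isChain_cancelCons (a : Bool) {m : List Bool} (h : m.IsChain (· ≠ ·)) :
    (cancelCons a m).IsChain (· ≠ ·) := by
  cases m with
  | nil => simp [cancelCons]
  | cons b r =>
    by_cases hab : a = b
    · simpa [cancelCons, hab] using h.tail
    · simpa [cancelCons, hab] using List.isChain_cons_cons.2 ⟨hab, h⟩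

lemma isChain_reduce (l : List Bool) : (reduce l).IsChain (· ≠ ·) := by
  induction l with
  | nil => simp [reduce]
  | cons a l ih => exact isChain_cancelCons a ih

lemma cancelCons_cancelCons (a : Bool) {m : List Bool} (h : m.IsChain (· ≠ ·)) :
    cancelCons a (cancelCons a m) = m := by
  match m, h with
  | [], _ => simp [cancelCons]
  | [b], _ => by_cases hab : a = b <;> simp [cancelCons, hab]
  | b :: c :: r, h =>
    have hbc : b ≠ c := (List.isChain_cons_cons.1 h).1
    by_cases hab : a = b
    · subst hab; simp [cancelCons, hbc]
    · simp [cancelCons, hab]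

lemma reduce_eq_self {m : List Bool} (h : m.IsChain (· ≠ ·)) : reduce m = m := by
  induction m with
  | nil => rfl
  | cons a r ih =>
    rw [reduce, ih h.tail]
    cases r with
    | nil => rfl
    | cons b r => simp [cancelCons, (List.isChain_cons_cons.1 h).1]

lemma reduce_append_cons_cons (p s : List Bool) (a : Bool) :
    reduce (p ++ a :: a :: s) = reduce (p ++ s) := by
  induction p with
  | nil => exact cancelCons_cancelCons a (isChain_reduce s)
  | cons c p ih => simp only [List.cons_append, reduce, ih]

lemma edge_append_cons_cons (p s : List Bool) (a : Bool) :
    Edge (p ++ a :: a :: s) (p.length + 1) (p ++ s) := by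
  refine ⟨by omega, by simp, ?_, ?_⟩
  · simp
  · simp [List.drop_append, List.drop_eq_nil_of_le (by omega : p.length ≤ p.length + 1 + 1),
      show p.length + 1 + 1 - p.length = 2 by omega]

lemma Edge.exists_eq_append {l l' : List Bool} {i : ℕ} (h : Edge l i l') :
    ∃ p a s, l = p ++ a :: a :: s ∧ l' = p ++ s ∧ i = p.length + 1 := by
  obtain ⟨hi, hlen, heq, rfl⟩ := h
  have hi1 : i - 1 < l.length := by omega
  have hi2 : i < l.length := by omega
  rw [List.getElem?_eq_getElem hi1, List.getElem?_eq_getElem hi2, Option.some_inj] at heq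
  refine ⟨l.take (i - 1), l[i], l.drop (i + 1), ?_, rfl, by simp; omega⟩
  conv_lhs => rw [← List.take_append_drop (i - 1) l]
  rw [List.drop_eq_getElem_cons hi1, List.drop_eq_getElem_cons (by omega : i - 1 + 1 < l.length)]
  simp [heq, show i - 1 + 1 = i by omega]

lemma Edge.cons {l l' : List Bool} {i : ℕ} (a : Bool) (h : Edge l i l') :
    Edge (a :: l) (i + 1) (a :: l') := by
  obtain ⟨p, b, s, rfl, rfl, rfl⟩ := h.exists_eq_append
  exact edge_append_cons_cons (a :: p) s b

lemma Edge.reduce_eq {l l' : List Bool} {i : ℕ} (h : Edge l i l') : reduce l = reduce l' := by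
  obtain ⟨p, a, s, rfl, rfl, -⟩ := h.exists_eq_append
  exact reduce_append_cons_cons p s a

def Step (l l' : List Bool) : Prop := ∃ i, Edge l i l'

lemma exists_pathP_iff {l l' : List Bool} :
    (∃ pat, PathP l pat l') ↔ ReflTransGen Step l l' := by
  constructor
  · rintro ⟨pat, h⟩
    induction h with
    | nil => exact .refl
    | cons e _ ih => exact .head ⟨_, e⟩ ih
  · intro h
    induction h using ReflTransGen.head_induction_on with
    | refl => exact ⟨[], .nil _⟩
    | head e _ ih =>
      obtain ⟨i, e⟩ := e
      obtain ⟨pat, hp⟩ := ih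
      exact ⟨i :: pat, .cons e hp⟩

lemma reflTransGen_step_reduce (l : List Bool) : ReflTransGen Step l (reduce l) := by
  induction l with
  | nil => exact .refl
  | cons a l ih =>
    have hcons : ReflTransGen Step (a :: l) (a :: reduce l) :=
      ih.lift (a :: ·) fun _ _ ⟨i, e⟩ => ⟨i + 1, e.cons a⟩
    rcases hm : reduce l with _ | ⟨b, r⟩
    · simpa [reduce, hm, cancelCons] using hcons
    · by_cases hab : a = b
      · subst hab
        rw [hm] at hcons
        simpa [reduce, hm, cancelCons] using hcons.tail ⟨1, edge_append_cons_cons [] r a⟩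
      · simpa [reduce, hm, cancelCons, hab] using hcons

lemma eqvGen_step_iff_reduce_eq {l l' : List Bool} : EqvGen Step l l' ↔ reduce l = reduce l' := by
  constructor
  · intro h
    induction h with
    | rel _ _ h =>
      obtain ⟨_, e⟩ := h
      exact e.reduce_eq
    | refl => rfl
    | symm _ _ _ ih => exact ih.symm
    | trans _ _ _ _ _ ih ih' => exact ih.trans ih'
  · intro h
    have hl := EqvGen.reflTransGen_le_eqvGen _ _ _ (reflTransGen_step_reduce l)
    have hl' := EqvGen.reflTransGen_le_eqvGen _ _ _ (reflTransGen_step_reduce l')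
    exact hl.trans _ _ _ (h ▸ hl'.symm)

lemma falt_succ (n : ℕ) : falt (n + 1) = true :: negT (falt n) := by
  simp only [falt, negT, List.range_succ_eq_map, List.map_cons, List.map_map]
  congr 1
  refine List.map_congr_left fun j _ => ?_
  simp only [Function.comp_apply]
  rcases Nat.mod_two_eq_zero_or_one j with h | h <;> simp [h, Nat.succ_mod_two_eq_zero_iff]

lemma negT_falt_succ (n : ℕ) : negT (falt (n + 1)) = false :: falt n := by
  simp [falt_succ, negT, Function.comp_def]

lemma length_falt (n : ℕ) : (falt n).length = n := by
  simp [falt]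

lemma isChain_falt (n : ℕ) : (falt n).IsChain (· ≠ ·) := by
  rw [falt, List.isChain_map, List.isChain_range]
  intro m _
  rcases Nat.mod_two_eq_zero_or_one m with h | h <;> simp [h, Nat.succ_mod_two_eq_zero_iff]

lemma target_natCast (n : ℕ) : target n = falt n := by
  simp [target]

lemma target_neg_natCast {n : ℕ} (hn : 0 < n) : target (-n) = negT (falt n) := by
  rw [target, if_neg (by omega)]
  simp

lemma isChain_target (t : ℤ) : (target t).IsChain (· ≠ ·) := by
  unfold target negT
  split
  · exact isChain_falt _
  · simpa [List.isChain_map] using isChain_falt _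

lemma cons_eq_ite_falt_of_isChain {a : Bool} {r : List Bool} (h : (a :: r).IsChain (· ≠ ·)) :
    a :: r = if a then falt (r.length + 1) else negT (falt (r.length + 1)) := by
  induction r generalizing a with
  | nil => cases a <;> rfl
  | cons b r ih =>
    have hb : b = !a := by
      have := (List.isChain_cons_cons.1 h).1
      cases a <;> cases b <;> simp_all
    have hr := ih h.tail
    subst hb
    cases a
    · simpa [negT_falt_succ] using hr
    · simpa [falt_succ] using hr

def signedLength (m : List Bool) : ℤ := if m.head? = some false then -m.length else m.length

lemma signedLength_target (t : ℤ) : signedLength (target t) = t := by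
  rcases t with (_ | n) | n
  · rfl
  · rw [Int.ofNat_eq_natCast, target_natCast, falt_succ]
    simp [signedLength, negT, length_falt]
  · rw [Int.negSucc_eq, ← Nat.cast_succ, target_neg_natCast n.succ_pos, negT_falt_succ]
    simp [signedLength, length_falt]

lemma target_signedLength {m : List Bool} (h : m.IsChain (· ≠ ·)) :
    target (signedLength m) = m := by
  cases m with
  | nil => rfl
  | cons a r =>
    rw [cons_eq_ite_falt_of_isChain h]
    cases a
    · have : signedLength (negT (falt (r.length + 1))) = -↑(r.length + 1) := by
        simp [negT_falt_succ, signedLength, length_falt]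
      rw [if_neg Bool.false_ne_true, this, target_neg_natCast r.length.succ_pos]
    · have : signedLength (falt (r.length + 1)) = ↑(r.length + 1) := by
        simp [falt_succ, signedLength, length_falt, negT]
      rw [if_pos rfl, this, target_natCast]

lemma vmem_iff_reduce_eq {t : ℤ} {l : List Bool} : Vmem t l ↔ reduce l = target t := by
  refine ⟨fun ⟨pat, hp⟩ => ?_, fun h => ?_⟩
  · rw [← reduce_eq_self (isChain_target t)]
    exact eqvGen_step_iff_reduce_eq.1
      (EqvGen.reflTransGen_le_eqvGen _ _ _ (exists_pathP_iff.1 ⟨pat, hp⟩))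
  · exact exists_pathP_iff.2 (h ▸ reflTransGen_step_reduce l)

lemma vmem_signedLength_reduce (l : List Bool) : Vmem (signedLength (reduce l)) l :=
  vmem_iff_reduce_eq.2 (target_signedLength (isChain_reduce l)).symm

/-- the sets `V_t`, `t ∈ ℤ`, are pairwise disjoint and cover all sign
tuples (each tuple lies in exactly one `V_t`), and two tuples lie in a common `V_t`
exactly when they are connected in the underlying undirected reachability structure. -/
theorem stmt_11 :
    (∀ e : List Bool, ∃! t : ℤ, Vmem t e) ∧
      ∀ e e' : List Bool,
        (∃ t : ℤ, Vmem t e ∧ Vmem t e') ↔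
          Relation.ReflTransGen
            (fun a b => (∃ i : ℕ, Edge a i b) ∨ (∃ i : ℕ, Edge b i a)) e e' := by
  refine ⟨fun e => ⟨_, vmem_signedLength_reduce e, fun t ht => ?_⟩, fun e e' => ?_⟩
  · rw [vmem_iff_reduce_eq.1 ht, signedLength_target]
  · change _ ↔ ReflTransGen (SymmGen Step) e e'
    rw [EqvGen.reflTransGen_symmGen, eqvGen_step_iff_reduce_eq]
    simp only [vmem_iff_reduce_eq]
    have hreduce := (target_signedLength (isChain_reduce e)).symm
    exact ⟨fun ⟨t, h, h'⟩ => h.trans h'.symm, fun h => ⟨_, hreduce, h ▸ hreduce⟩⟩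
end

section
/- Let e = (e₁,…,e_k) = ±f_{t₁,…,t_m} ∈ V₀ be a nonempty sign tuple in the component of the empty tuple, and suppose additionally e_{t₁+2} = e_{t₁+1} (equivalently m > 2 and t₂ = 1). Then there exists a path e → f₀ in the sign-deletion graph whose label pattern has the form (i₁,…,i_S, t₁+1, t₁, t₁−1, …, 2, 1) with i_j > t₁ + 2 for all j = 1,…,S. -/
/-- The alternating tuple of length `t` starting with the sign `s`. -/
def altFrom (s : Bool) : ℕ → List Bool
  | 0 => []
  | t + 1 => s :: altFrom (!s) t

/-- Auxiliary: concatenation of alternating blocks of lengths `ts`, starting with sign `s`,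
each block starting with the sign ending the previous one (so adjacent entries agree
exactly at block junctions). -/
def fcatAux (s : Bool) : List ℕ → List Bool
  | [] => []
  | t :: ts => altFrom s t ++ fcatAux (if t % 2 = 1 then s else !s) ts

/-- `f_{t₁,…,t_m}`: the concatenation of alternating blocks of lengths `t₁,…,t_m`. -/
def fcat (ts : List ℕ) : List Bool := fcatAux true ts

/-- `sgn ε l` is `l` if `ε = +1` and `−l` if `ε = −1`. -/
def sgn (e : Bool) (l : List Bool) : List Bool := if e then l else negT l

/-!
Cancelling two adjacent equal entries is a rewriting with the diamond property, hence confluent: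
a tuple without adjacent equal entries is the unique normal form of anything reducing to it.
Write `e = A ++ x :: x :: b` with `A = ±f_{t₁}` alternating. As `e` reduces to `[]`, so does
`A ++ b`; then `A.reverse ++ A ++ b` reduces both to `b` and to the irreducible `A.reverse`, so
`b` reduces to `A.reverse`. Performed inside `e`, these steps carry labels `> t₁ + 2` and leave the
palindrome `A ++ [x, x] ++ A.reverse`, which collapses from the middle with labels `t₁ + 1, …, 1`.
-/

open Relation

theorem List.exists_eq_take_append_cons_cons {α : Type*} {l : List α} {n : ℕ}
    (hn : n + 2 ≤ l.length) (h : l[n + 1]? = l[n]?) :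
    ∃ x, l = l.take n ++ x :: x :: l.drop (n + 2) := by
  have hget : l[n + 1] = l[n] := by
    rwa [List.getElem?_eq_getElem, List.getElem?_eq_getElem, Option.some_inj] at h
  refine ⟨l[n], ?_⟩
  conv_lhs => rw [← l.take_append_drop n, List.drop_eq_getElem_cons (by omega),
    List.drop_eq_getElem_cons (by omega), hget]

section Cancellation

variable {α : Type*}

def CancelStep (l l' : List α) : Prop := ∃ u x v, l = u ++ x :: x :: v ∧ l' = u ++ v

theorem CancelStep.append_left {l l' : List α} (c : List α) (h : CancelStep l l') :
    CancelStep (c ++ l) (c ++ l') := by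
  obtain ⟨u, x, v, rfl, rfl⟩ := h
  exact ⟨c ++ u, x, v, by simp, by simp⟩

theorem CancelStep.append_right {l l' : List α} (c : List α) (h : CancelStep l l') :
    CancelStep (l ++ c) (l' ++ c) := by
  obtain ⟨u, x, v, rfl, rfl⟩ := h
  exact ⟨u, x, v ++ c, by simp, by simp⟩

theorem cancelSteps_append_left {l l' : List α} (c : List α)
    (h : ReflTransGen CancelStep l l') : ReflTransGen CancelStep (c ++ l) (c ++ l') :=
  h.lift (c ++ ·) fun _ _ => CancelStep.append_left c

theorem cancelSteps_append_right {l l' : List α} (c : List α)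
    (h : ReflTransGen CancelStep l l') : ReflTransGen CancelStep (l ++ c) (l' ++ c) :=
  h.lift (· ++ c) fun _ _ => CancelStep.append_right c

theorem not_cancelStep_of_isChain_ne {l l' : List α} (hl : l.IsChain (· ≠ ·)) :
    ¬ CancelStep l l' := by
  rintro ⟨u, x, v, rfl, -⟩
  exact (List.isChain_cons_cons.1 (List.isChain_append.1 hl).2.1).1 rfl

theorem cancelSteps_append_reverse (c : List α) :
    ReflTransGen CancelStep (c ++ c.reverse) [] := by
  induction c using List.reverseRecOn with
  | nil => exact .refl
  | append_singleton d x ih => exact .head ⟨d, x, d.reverse, by simp, rfl⟩ ih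

theorem cancelStep_join_of_le {u u' v v' : List α} {x y : α}
    (h : u ++ x :: x :: v = u' ++ y :: y :: v') (hle : u.length ≤ u'.length) :
    u ++ v = u' ++ v' ∨ ∃ w, CancelStep (u ++ v) w ∧ CancelStep (u' ++ v') w := by
  rcases List.append_eq_append_iff.1 h with ⟨t, rfl, ht⟩ | ⟨t, rfl, ht⟩
  · match t, ht with
    | [], ht =>
      simp only [List.nil_append, List.cons.injEq] at ht
      obtain ⟨-, -, rfl⟩ := ht
      simp
    | [_], ht =>
      simp only [List.singleton_append, List.cons.injEq] at ht
      obtain ⟨rfl, rfl, rfl⟩ := ht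
      simp
    | _ :: _ :: t', ht =>
      simp only [List.cons_append, List.cons.injEq] at ht
      obtain ⟨rfl, rfl, rfl⟩ := ht
      exact .inr ⟨u ++ t' ++ v', ⟨u ++ t', y, v', by simp, by simp⟩,
        ⟨u, x, t' ++ v', by simp, by simp⟩⟩
  · obtain rfl : t = [] := by simpa using hle
    simp only [List.nil_append, List.cons.injEq] at ht
    obtain ⟨-, -, rfl⟩ := ht
    simp

theorem cancelStep_diamond (a b c : List α) (hb : CancelStep a b) (hc : CancelStep a c) :
    ∃ d, ReflGen CancelStep b d ∧ ReflTransGen CancelStep c d := by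
  obtain ⟨u, x, v, rfl, rfl⟩ := hb
  obtain ⟨u', y, v', h, rfl⟩ := hc
  rcases le_total u.length u'.length with hle | hle
  · rcases cancelStep_join_of_le h hle with h | ⟨w, hw, hw'⟩
    · exact ⟨_, h ▸ .refl, .refl⟩
    · exact ⟨w, .single hw, .single hw'⟩
  · rcases cancelStep_join_of_le h.symm hle with h | ⟨w, hw', hw⟩
    · exact ⟨_, .refl, h ▸ .refl⟩
    · exact ⟨w, .single hw, .single hw'⟩

theorem cancelSteps_of_cancelSteps_of_isChain_ne {a b n : List α} (hn : n.IsChain (· ≠ ·))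
    (han : ReflTransGen CancelStep a n) (hab : ReflTransGen CancelStep a b) :
    ReflTransGen CancelStep b n := by
  obtain ⟨d, hnd, hbd⟩ := church_rosser cancelStep_diamond han hab
  rcases hnd.cases_head with rfl | ⟨_, h, -⟩
  · exact hbd
  · exact absurd h (not_cancelStep_of_isChain_ne hn)

theorem cancelSteps_reverse_of_append_cancelSteps_nil {a b : List α} (ha : a.IsChain (· ≠ ·))
    (h : ReflTransGen CancelStep (a ++ b) []) : ReflTransGen CancelStep b a.reverse := by
  have hleft : ReflTransGen CancelStep (a.reverse ++ (a ++ b)) a.reverse := by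
    simpa using cancelSteps_append_left a.reverse h
  have hright : ReflTransGen CancelStep (a.reverse ++ (a ++ b)) b := by
    have := cancelSteps_append_right b (cancelSteps_append_reverse a.reverse)
    rwa [a.reverse_reverse, List.append_assoc, List.nil_append] at this
  refine cancelSteps_of_cancelSteps_of_isChain_ne ?_ hleft hright
  exact List.isChain_reverse.2 (ha.imp fun _ _ => Ne.symm)

end Cancellation

theorem edge_append_cons_cons_s16 (u : List Bool) (x : Bool) (v : List Bool) :
    Edge (u ++ x :: x :: v) (u.length + 1) (u ++ v) := by
  refine ⟨by omega, by simp, by simp, ?_⟩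
  simp [List.drop_append, show u.length + 1 + 1 - u.length = 2 by omega,
      show u.length ≤ u.length + 1 + 1 by omega]

theorem Edge.cancelStep {l l' : List Bool} {i : ℕ} (h : Edge l i l') : CancelStep l l' := by
  obtain ⟨hi, hlen, heq, rfl⟩ := h
  obtain ⟨k, rfl⟩ : ∃ k, i = k + 1 := ⟨i - 1, by omega⟩
  obtain ⟨x, hl⟩ := List.exists_eq_take_append_cons_cons (by omega : k + 2 ≤ l.length) heq.symm
  exact ⟨l.take k, x, l.drop (k + 2), hl, by simp⟩

theorem PathP.cancelSteps {l l' : List Bool} {pat : List ℕ} (h : PathP l pat l') :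
    ReflTransGen CancelStep l l' := by
  induction h with
  | nil => exact .refl
  | cons e _ ih => exact .head e.cancelStep ih

theorem PathP.append {l m n : List Bool} {p q : List ℕ} (h₁ : PathP l p m) (h₂ : PathP m q n) :
    PathP l (p ++ q) n := by
  induction h₁ with
  | nil => exact h₂
  | cons e _ ih => exact .cons e (ih h₂)

theorem exists_pathP_append_of_cancelSteps {b m : List Bool} (p : List Bool)
    (h : ReflTransGen CancelStep b m) :
    ∃ pat, (∀ i ∈ pat, p.length < i) ∧ PathP (p ++ b) pat (p ++ m) := by
  induction h using ReflTransGen.head_induction_on with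
  | refl => exact ⟨[], by simp, .nil _⟩
  | head hstep _ ih =>
    obtain ⟨u, x, v, rfl, rfl⟩ := hstep
    obtain ⟨pat, hpat, hpath⟩ := ih
    refine ⟨(p.length + u.length + 1) :: pat, ?_, .cons ?_ hpath⟩
    · simpa using fun i hi => hpat i hi
    · simpa using edge_append_cons_cons_s16 (p ++ u) x v

theorem map_range_succ_sub (n : ℕ) :
    (List.range (n + 1)).map (fun j => n + 1 - j) =
      (n + 1) :: (List.range n).map fun j => n - j := by
  simp [List.range_succ_eq_map]

theorem pathP_append_reverse (c : List Bool) :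
    PathP (c ++ c.reverse) ((List.range c.length).map fun j => c.length - j) [] := by
  induction c using List.reverseRecOn with
  | nil => exact .nil []
  | append_singleton d x ih =>
    rw [List.length_append, List.length_singleton, map_range_succ_sub]
    exact .cons (by simpa using edge_append_cons_cons_s16 d x d.reverse) ih

theorem altFrom_length (s : Bool) (n : ℕ) : (altFrom s n).length = n := by
  induction n generalizing s with
  | zero => rfl
  | succ n ih => simp [altFrom, ih]

theorem isChain_ne_altFrom : ∀ (s : Bool) (n : ℕ), (altFrom s n).IsChain (· ≠ ·)
  | _, 0 => .nil
  | _, 1 => .singleton _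
  | s, n + 2 => by
    have := isChain_ne_altFrom (!s) (n + 1)
    simp only [altFrom] at this ⊢
    exact this.cons_cons (by simp)

theorem negT_altFrom (s : Bool) (n : ℕ) : negT (altFrom s n) = altFrom (!s) n := by
  induction n generalizing s with
  | zero => rfl
  | succ n ih => simpa [altFrom, negT] using ih (!s)

theorem exists_sgn_fcat_cons_eq_altFrom_append (ε : Bool) (t : ℕ) (ts : List ℕ) :
    ∃ c, sgn ε (fcat (t :: ts)) = altFrom ε t ++ c := by
  cases ε
  · exact ⟨_, by rw [sgn, if_neg Bool.false_ne_true, fcat, fcatAux, negT, List.map_append, ← negT,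
      negT_altFrom]; rfl⟩
  · exact ⟨_, rfl⟩

theorem stmt_16_general (ε : Bool) (t₁ : ℕ) (rest : List ℕ)
    (e : List Bool) (he : e = sgn ε (fcat (t₁ :: rest)))
    (h0 : Vmem 0 e) (hlen : t₁ + 2 ≤ e.length) (heq : e[t₁ + 1]? = e[t₁]?) :
    ∃ pre : List ℕ, (∀ i ∈ pre, t₁ + 2 < i) ∧
      PathP e (pre ++ (t₁ + 1) :: (List.range t₁).map fun j => t₁ - j) [] := by
  set A := altFrom ε t₁
  have hA : A.length = t₁ := altFrom_length ε t₁
  have htake : e.take t₁ = A := by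
    obtain ⟨c, hc⟩ := exists_sgn_fcat_cons_eq_altFrom_append ε t₁ rest
    rw [he, hc]
    exact List.take_left' hA
  obtain ⟨x, hx⟩ := List.exists_eq_take_append_cons_cons hlen heq
  rw [htake] at hx
  set b := e.drop (t₁ + 2)
  have hAb : ReflTransGen CancelStep (A ++ b) [] := by
    obtain ⟨pat, hpat⟩ := h0
    exact cancelSteps_of_cancelSteps_of_isChain_ne .nil hpat.cancelSteps
      (.single ⟨A, x, b, hx, rfl⟩)
  obtain ⟨pre, hpre, hpath⟩ := exists_pathP_append_of_cancelSteps (A ++ [x, x])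
    (cancelSteps_reverse_of_append_cancelSteps_nil (isChain_ne_altFrom ε t₁) hAb)
  refine ⟨pre, by simpa [hA] using hpre, ?_⟩
  have hcollapse := pathP_append_reverse (A ++ [x])
  rw [List.length_append, List.length_singleton, hA, map_range_succ_sub] at hcollapse
  rw [hx, show A ++ x :: x :: b = A ++ [x, x] ++ b by simp]
  exact hpath.append (by simpa using hcollapse)

/-- if moreover `e_{t₁+2} = e_{t₁+1}` (equivalently `m > 2` and `t₂ = 1`),
then there is a path `e → f₀` whose pattern is `(i₁,…,i_S, t₁+1, t₁, t₁−1, …, 2, 1)` with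
every `i_j > t₁ + 2`. -/
theorem stmt_16 (ε : Bool) (t₁ : ℕ) (rest : List ℕ) (h₁ : 0 < t₁)
    (hr : ∀ x ∈ rest, 0 < x) (e : List Bool) (he : e = sgn ε (fcat (t₁ :: rest)))
    (h0 : Vmem 0 e) (hlen : t₁ + 2 ≤ e.length) (heq : e[t₁ + 1]? = e[t₁]?) :
    ∃ pre : List ℕ, (∀ i ∈ pre, t₁ + 2 < i) ∧
      PathP e (pre ++ (t₁ + 1) :: (List.range t₁).map fun j => t₁ - j) [] :=
  stmt_16_general ε t₁ rest e he h0 hlen heq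
end
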